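/- The Naive KAM evaluates the consuming scrolling algorithm in exponential space: there is a constant k > 0 such that for every binary string s ∈ {0,1}*, the complete Naive KAM run from the initial state (toy ⟨s⟩, ε, ε) contains a state whose closure count is at least k·2^{|s|}; hence the Naive KAM evaluates toy ⟨s⟩ in space Ω(2^{|s|}). -/

import Mathlib

set_option autoImplicit false

/-! λ-terms with variable names in ℕ. -/
inductive Term : Type
  | var : ℕ → Term
  | lam : ℕ → Term → Term
  | app : Term → Term → Term
deriving DecidableEq

namespace Term

/-- Free variables. -/
def fv : Term → Finset ℕ
  | var x => {x}
  | lam x t => fv t \ {x}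
  | app t u => fv t ∪ fv u

/-- A term is closed if it has no free variables. -/
def closed (t : Term) : Prop := t.fv = ∅

/-- Substitution of `u` for the free occurrences of `x`; it is capture-avoiding
whenever the substituted term `u` is closed, which is the only case arising in
Closed Call-by-Name. -/
def subst (x : ℕ) (u : Term) : Term → Term
  | var y => if y = x then u else var y
  | lam y t => if y = x then lam y t else lam y (subst x u t)
  | app t r => app (subst x u t) (subst x u r)

/-- In-order (left-to-right) enumeration of the constructors (as subterm occurrences). -/
def inorder : Term → List Term
  | var x => [var x]
  | lam x t => lam x t :: inorder t
  | app t u => inorder t ++ app t u :: inorder u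

/-- Membership in the deterministic λ-calculus `Λdet`: the right subterm of every
application is a variable or an abstraction. -/
def IsDet : Term → Prop
  | var _ => True
  | lam _ t => IsDet t
  | app t u => IsDet t ∧ IsDet u ∧ ((∃ x, u = var x) ∨ ∃ x r, u = lam x r)

end Term

/-- Weak head reduction: `(λx.t) u r1 … rh →wh t{x:=u} r1 … rh`. -/
inductive Whr : Term → Term → Prop
  | beta (x : ℕ) (t u : Term) : Whr (Term.app (Term.lam x t) u) (Term.subst x u t)
  | appL {t t' : Term} (u : Term) : Whr t t' → Whr (Term.app t u) (Term.app t' u)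

def WhNormal (t : Term) : Prop := ∀ u, ¬ Whr t u

/-- `NSteps R n a b`: exactly `n` `R`-steps from `a` to `b`. -/
inductive NSteps {α : Type _} (R : α → α → Prop) : ℕ → α → α → Prop
  | refl (a : α) : NSteps R 0 a a
  | head {a b c : α} {n : ℕ} : R a b → NSteps R n b c → NSteps R (n + 1) a c

/-! Closures and (local) environments. -/
mutual
  inductive Clo : Type
    | mk : Term → Env → Clo
  inductive Env : Type
    | nil : Env
    | cons : ℕ → Clo → Env → Env
end

def Env.lookup : Env → ℕ → Option Clo
  | .nil, _ => none
  | .cons y c e, x => if y = x then some c else Env.lookup e x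

def Env.dom : Env → Finset ℕ
  | .nil => ∅
  | .cons x _ e => insert x (Env.dom e)

/-- Restriction `e|s` of an environment to a set of variables. -/
def Env.restrict : Env → Finset ℕ → Env
  | .nil, _ => .nil
  | .cons x c e, s => if x ∈ s then .cons x c (Env.restrict e s) else Env.restrict e s

mutual
  /-- Decoding of a closure into a λ-term. -/
  def Clo.decode : Clo → Term
    | .mk t e => Env.decode t e
  /-- Decoding: `(t, ε)↓ = t`, `(t, [x←c]·e)↓ = (t{x:=c↓}, e)↓`. -/
  def Env.decode : Term → Env → Term
    | t, .nil => t
    | t, .cons x c e => Env.decode (Term.subst x (Clo.decode c) t) e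
end

mutual
  /-- Hereditary number of closures in a closure (without sharing). -/
  def Clo.count : Clo → ℕ
    | .mk _ e => 1 + Env.count e
  def Env.count : Env → ℕ
    | .nil => 0
    | .cons _ c e => Clo.count c + Env.count e
end

mutual
  /-- A closure `(t,e)` is closed: `fv t ⊆ dom e` and hereditarily so. -/
  def Clo.Closed : Clo → Prop
    | .mk t e => t.fv ⊆ e.dom ∧ Env.ClosedE e
  def Env.ClosedE : Env → Prop
    | .nil => True
    | .cons _ c e => Clo.Closed c ∧ Env.ClosedE e
end

mutual
  /-- Environment domain invariant: `dom e = fv t`, hereditarily. -/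
  def Clo.DomInv : Clo → Prop
    | .mk t e => e.dom = t.fv ∧ Env.DomInvE e
  def Env.DomInvE : Env → Prop
    | .nil => True
    | .cons _ c e => Clo.DomInv c ∧ Env.DomInvE e
end

/-- Size of the left address of (the first occurrence of) `u` in the code `t0`:
the binary length of its index in the in-order enumeration of the constructors of `t0`. -/
def addrSize (t0 u : Term) : ℕ := Nat.size (t0.inorder.idxOf u)

mutual
  /-- Size of a closure, relative to the initial code `t0`. -/
  def Clo.size : Term → Clo → ℕ
    | t0, .mk u e => addrSize t0 u + Env.sizeE t0 e
  /-- Size of an environment, relative to the initial code `t0`. -/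
  def Env.sizeE : Term → Env → ℕ
    | _, .nil => 0
    | t0, .cons x c e => addrSize t0 (Term.var x) + Clo.size t0 c + Env.sizeE t0 e
end

def stackSize (t0 : Term) (S : List Clo) : ℕ := (S.map (Clo.size t0)).sum

/-- States of the (Naive/Space) KAM. -/
structure State where
  tm : Term
  env : Env
  stk : List Clo

/-- Size of a state, relative to the initial code `t0`. -/
def State.size (t0 : Term) (s : State) : ℕ :=
  addrSize t0 s.tm + Env.sizeE t0 s.env + stackSize t0 s.stk

/-- Closure count of a state: total number of closures occurring in it,
hereditarily and without sharing (the active term/environment pair is a closure). -/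
def State.count (s : State) : ℕ :=
  1 + Env.count s.env + (s.stk.map Clo.count).sum

def State.decode (s : State) : Term :=
  s.stk.foldl (fun a c => Term.app a c.decode) (Env.decode s.tm s.env)

def initState (t : Term) : State := ⟨t, .nil, []⟩

/-! The Naive KAM. -/
inductive NK : State → State → Prop
  | sea (t u : Term) (e : Env) (S : List Clo) :
      NK ⟨.app t u, e, S⟩ ⟨t, e, .mk u e :: S⟩
  | beta (x : ℕ) (t : Term) (e : Env) (c : Clo) (S : List Clo) :
      NK ⟨.lam x t, e, c :: S⟩ ⟨t, .cons x c e, S⟩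
  | sub {x : ℕ} {e : Env} {u : Term} {e' : Env} (S : List Clo) :
      Env.lookup e x = some (.mk u e') → NK ⟨.var x, e, S⟩ ⟨u, e', S⟩

def NKFinal (s : State) : Prop := ∀ s', ¬ NK s s'

/-- Naive KAM runs counting the number of β-transitions. -/
inductive NKRun : ℕ → State → State → Prop
  | refl (s : State) : NKRun 0 s s
  | sea {t u : Term} {e : Env} {S : List Clo} {s' : State} {n : ℕ} :
      NKRun n ⟨t, e, .mk u e :: S⟩ s' → NKRun n ⟨.app t u, e, S⟩ s'
  | beta {x : ℕ} {t : Term} {e : Env} {c : Clo} {S : List Clo} {s' : State} {n : ℕ} :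
      NKRun n ⟨t, .cons x c e, S⟩ s' → NKRun (n + 1) ⟨.lam x t, e, c :: S⟩ s'
  | sub {x : ℕ} {e : Env} {u : Term} {e' : Env} {S : List Clo} {s' : State} {n : ℕ} :
      Env.lookup e x = some (.mk u e') → NKRun n ⟨u, e', S⟩ s' → NKRun n ⟨.var x, e, S⟩ s'

/-! The Space KAM. -/
inductive SK : State → State → Prop
  | seav {t : Term} {x : ℕ} {e : Env} {c : Clo} (S : List Clo) :
      Env.lookup e x = some c →
      SK ⟨.app t (.var x), e, S⟩ ⟨t, e.restrict t.fv, c :: S⟩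
  | seanv {t u : Term} {e : Env} (S : List Clo) :
      (∀ x, u ≠ .var x) →
      SK ⟨.app t u, e, S⟩ ⟨t, e.restrict t.fv, .mk u (e.restrict u.fv) :: S⟩
  | betaw {x : ℕ} {t : Term} {e : Env} (c : Clo) (S : List Clo) :
      x ∉ t.fv → SK ⟨.lam x t, e, c :: S⟩ ⟨t, e, S⟩
  | betanw {x : ℕ} {t : Term} {e : Env} (c : Clo) (S : List Clo) :
      x ∈ t.fv → SK ⟨.lam x t, e, c :: S⟩ ⟨t, .cons x c e, S⟩
  | sub {x : ℕ} {e : Env} {u : Term} {e' : Env} (S : List Clo) :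
      Env.lookup e x = some (.mk u e') → SK ⟨.var x, e, S⟩ ⟨u, e', S⟩

def SKFinal (s : State) : Prop := ∀ s', ¬ SK s s'

/-- Space KAM runs counting the number of β-transitions (`→βw` and `→β¬w`). -/
inductive SKRun : ℕ → State → State → Prop
  | refl (s : State) : SKRun 0 s s
  | seav {t : Term} {x : ℕ} {e : Env} {c : Clo} {S : List Clo} {s' : State} {n : ℕ} :
      Env.lookup e x = some c →
      SKRun n ⟨t, e.restrict t.fv, c :: S⟩ s' → SKRun n ⟨.app t (.var x), e, S⟩ s'
  | seanv {t u : Term} {e : Env} {S : List Clo} {s' : State} {n : ℕ} :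
      (∀ x, u ≠ .var x) →
      SKRun n ⟨t, e.restrict t.fv, .mk u (e.restrict u.fv) :: S⟩ s' →
      SKRun n ⟨.app t u, e, S⟩ s'
  | betaw {x : ℕ} {t : Term} {e : Env} {c : Clo} {S : List Clo} {s' : State} {n : ℕ} :
      x ∉ t.fv → SKRun n ⟨t, e, S⟩ s' → SKRun (n + 1) ⟨.lam x t, e, c :: S⟩ s'
  | betanw {x : ℕ} {t : Term} {e : Env} {c : Clo} {S : List Clo} {s' : State} {n : ℕ} :
      x ∈ t.fv → SKRun n ⟨t, .cons x c e, S⟩ s' → SKRun (n + 1) ⟨.lam x t, e, c :: S⟩ s'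
  | sub {x : ℕ} {e : Env} {u : Term} {e' : Env} {S : List Clo} {s' : State} {n : ℕ} :
      Env.lookup e x = some (.mk u e') → SKRun n ⟨u, e', S⟩ s' → SKRun n ⟨.var x, e, S⟩ s'

/-! Concrete combinators. -/

/-- I := λx.x -/
def tmI : Term := .lam 0 (.var 0)
/-- θ := λx.λy.y (x x y)  (variables: x := 0, y := 1) -/
def tmTheta : Term := .lam 0 (.lam 1 (.app (.var 1) (.app (.app (.var 0) (.var 0)) (.var 1))))
/-- fix := θ θ -/
def tmFix : Term := .app tmTheta tmTheta
/-- x x y -/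
def xxy : Term := .app (.app (.var 0) (.var 0)) (.var 1)
/-- toyaux := λf.λz. z f f I  (f := 3, z := 2) -/
def tmToyaux : Term := .lam 3 (.lam 2 (.app (.app (.app (.var 2) (.var 3)) (.var 3)) tmI))
/-- toy := fix toyaux -/
def tmToy : Term := .app tmFix tmToyaux

/-- Scott encoding of binary strings (false = 0, true = 1; x0 := 4, x1 := 5, xε := 6):
`⟨ε⟩ := λx0.λx1.λxε.xε`, `⟨b·r⟩ := λx0.λx1.λxε.xb ⟨r⟩`. -/
def encStr : List Bool → Term
  | [] => .lam 4 (.lam 5 (.lam 6 (.var 6)))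
  | b :: r => .lam 4 (.lam 5 (.lam 6 (.app (.var (if b then 5 else 4)) (encStr r))))

/-- A variable fresh for `t`. -/
def freshVar (t : Term) : ℕ := t.fv.sup id + 1

/-- η-expansion: `η(t) := λx. t x` with `x ∉ fv t`. -/
def Term.eta (t : Term) : Term := .lam (freshVar t) (.app t (.var (freshVar t)))

/-- n-fold η-expansion. -/
def etaN (n : ℕ) (t : Term) : Term := Term.eta^[n] t

/-! Environment families for the Naive KAM scrolling invariant
(variables: x := 0, y := 1, z := 2, f := 3, x0 := 4, x1 := 5, xε := 6). -/

/-- `e0 := [x←(θ,ε)]·[y←(toyaux,ε)]`, `e(i+1) := [x←(x,ei)]·[y←(y,ei)]`. -/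
def eE : ℕ → Env
  | 0 => .cons 0 (.mk tmTheta .nil) (.cons 1 (.mk tmToyaux .nil) .nil)
  | i + 1 => .cons 0 (.mk (.var 0) (eE i)) (.cons 1 (.mk (.var 1) (eE i)) .nil)

/-- `e″0 := ε`, `e″(i+1) := [xε←(I,e′i)]·[x1←(f,e′i)]·[x0←(f,e′i)]·e″i`
(with `e′i` inlined). -/
def eDD (s : List Bool) : ℕ → Env
  | 0 => .nil
  | i + 1 =>
    let ep : Env := .cons 2 (.mk (encStr (s.drop i)) (eDD s i)) (.cons 3 (.mk xxy (eE i)) .nil)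
    .cons 6 (.mk tmI ep) (.cons 5 (.mk (.var 3) ep) (.cons 4 (.mk (.var 3) ep) (eDD s i)))

/-- `e′i := [z←(⟨b(i+1)⋯bn⟩, e″i)]·[f←(x x y, ei)]`. -/
def eP (s : List Bool) (i : ℕ) : Env :=
  .cons 2 (.mk (encStr (s.drop i)) (eDD s i)) (.cons 3 (.mk xxy (eE i)) .nil)

/-! The family `tn` for the abstract-time overhead explosion
(variables `xi := i`). -/

/-- `x0 x1 ⋯ xn`. -/
def varsApp : ℕ → Term
  | 0 => .var 0
  | n + 1 => .app (varsApp n) (.var (n + 1))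

/-- Term component of `Sn`: `x0 x0` for `n = 0`, `x0 ⋯ xn` for `n ≥ 1`. -/
def sTerm : ℕ → Term
  | 0 => .app (.var 0) (.var 0)
  | n + 1 => varsApp (n + 1)

/-- `e0 := [x0←(I,ε)]`, `e(n+1) := [x(n+1)←Sn]·en`. -/
def eN : ℕ → Env
  | 0 => .cons 0 (.mk tmI .nil) .nil
  | n + 1 => .cons (n + 1) (.mk (sTerm n) (eN n)) (eN n)

/-- `Sn := (sTerm n, en)`. -/
def sClo (n : ℕ) : Clo := .mk (sTerm n) (eN n)

/-- `Ci⟨t⟩ := λxi. t (x0 ⋯ xi)` (with `C0⟨t⟩ = λx0. t (x0 x0)`). -/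
def cPlug (i : ℕ) (t : Term) : Term := .lam i (.app t (sTerm i))

/-- `C0⟨C1⟨⋯Cn⟨t⟩⋯⟩⟩`. -/
def nest (n : ℕ) (t : Term) : Term := (List.range (n + 1)).foldr cPlug t

/-- `tn := C0⟨C1⟨⋯Cn⟨λy.I⟩⋯⟩⟩ I`. -/
def tN (n : ℕ) : Term := .app (nest n (.lam 1 tmI)) tmI

/-! Global-copy scrolling terms (s′ := 7, z := 2, x := 0, f := 3). -/

/-- `λf.λs′. s′ f f z` (free variable z). -/
def tScroll : Term :=
  .lam 3 (.lam 7 (.app (.app (.app (.var 7) (.var 3)) (.var 3)) (.var 2)))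

/-- `glCpy := λx.( fix (λf.λs′. s′ f f x) ) x`. -/
def glCpy : Term :=
  .lam 0 (.app (.app tmFix
    (.lam 3 (.lam 7 (.app (.app (.app (.var 7) (.var 3)) (.var 3)) (.var 0)))))
    (.var 0))

/-! The Space LAM. -/

structure LState where
  dump : List (Clo × List Clo)
  tm : Term
  env : Env
  stk : List Clo

inductive LAM : LState → LState → Prop
  | sea {D : List (Clo × List Clo)} {t u : Term} {e : Env} {S : List Clo} :
      LAM ⟨D, .app t u, e, S⟩ ⟨(.mk t (e.restrict t.fv), S) :: D, u, e.restrict u.fv, []⟩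
  | ret {D : List (Clo × List Clo)} {u : Term} {e' : Env} {S : List Clo}
      {x : ℕ} {t : Term} {e : Env} :
      LAM ⟨(.mk u e', S) :: D, .lam x t, e, []⟩ ⟨D, u, e', .mk (.lam x t) e :: S⟩
  | betaw {D : List (Clo × List Clo)} {x : ℕ} {t : Term} {e : Env} {c : Clo} {S : List Clo} :
      x ∉ t.fv → LAM ⟨D, .lam x t, e, c :: S⟩ ⟨D, t, e, S⟩
  | betanw {D : List (Clo × List Clo)} {x : ℕ} {t : Term} {e : Env} {c : Clo} {S : List Clo} :
      x ∈ t.fv → LAM ⟨D, .lam x t, e, c :: S⟩ ⟨D, t, .cons x c e, S⟩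
  | sub {D : List (Clo × List Clo)} {x : ℕ} {e : Env} {u : Term} {e' : Env} {S : List Clo} :
      Env.lookup e x = some (.mk u e') → LAM ⟨D, .var x, e, S⟩ ⟨D, u, e', S⟩

def LFinal (ls : LState) : Prop := ∀ ls', ¬ LAM ls ls'

/-- The Space KAM state `(t,e,S)` seen as the Space LAM state `(ε,t,e,S)`. -/
def embed (s : State) : LState := ⟨[], s.tm, s.env, s.stk⟩

def lInit (t : Term) : LState := ⟨[], t, .nil, []⟩

def LState.size (t0 : Term) (ls : LState) : ℕ :=
  (ls.dump.map (fun p => Clo.size t0 p.1 + stackSize t0 p.2)).sum +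
    addrSize t0 ls.tm + Env.sizeE t0 ls.env + stackSize t0 ls.stk

/-- A LAM-sequence from `a` whose first state with empty dump after `a` is its target. -/
inductive LRunToEmpty : LState → LState → Prop
  | single {a b : LState} : LAM a b → b.dump = [] → LRunToEmpty a b
  | cons {a b c : LState} : LAM a b → b.dump ≠ [] → LRunToEmpty b c → LRunToEmpty a c

/-! Log-sensitive Turing machines. -/

/-- Input-tape alphabet {0, 1, L, R}. -/
inductive ISym : Type | zero | one | lend | rend
deriving DecidableEq

/-- Work-tape alphabet {0, 1, □}. -/
inductive WSym : Type | zero | one | blank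
deriving DecidableEq

/-- Head moves. -/
inductive Move : Type | L | R | N
deriving DecidableEq

/-- A log-sensitive Turing machine: states `Fin n`, initial state, final states
`qtrue = s1` and `qfalse = s0`, and a deterministic transition function reading the
current state and the two scanned symbols, writing on the work tape, moving both
heads, and changing state (`none` = halt). -/
structure TM where
  n : ℕ
  start : Fin n
  qtrue : Fin n
  qfalse : Fin n
  δ : Fin n → ISym → WSym → Option (Fin n × WSym × Move × Move)

/-- A configuration: state, input-head position (on the tape `L i R`), and the
work tape split as (left part, reversed) / scanned symbol / (right part). -/
structure Config (M : TM) where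
  q : Fin M.n
  ipos : ℕ
  wl : List WSym
  wcur : WSym
  wr : List WSym

/-- The symbol of the input tape `L i R` at a given position. -/
def inputAt (i : List Bool) (p : ℕ) : ISym :=
  if p = 0 then .lend
  else if h : p - 1 < i.length then (if i.get ⟨p - 1, h⟩ then .one else .zero)
  else .rend

def moveIpos (p : ℕ) : Move → ℕ
  | .L => p - 1
  | .R => p + 1
  | .N => p

def moveWork (wl : List WSym) (c : WSym) (wr : List WSym) : Move → List WSym × WSym × List WSym
  | .L => match wl with
    | [] => ([], .blank, c :: wr)
    | a :: l => (l, a, c :: wr)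
  | .R => match wr with
    | [] => (c :: wl, .blank, [])
    | a :: r => (c :: wl, a, r)
  | .N => (wl, c, wr)

/-- One transition of the TM `M` on input `i`. -/
def TMStep (M : TM) (i : List Bool) (c c' : Config M) : Prop :=
  ∃ q' w mi mw, M.δ c.q (inputAt i c.ipos) c.wcur = some (q', w, mi, mw) ∧
    c'.q = q' ∧ c'.ipos = moveIpos c.ipos mi ∧
    (c'.wl, c'.wcur, c'.wr) = moveWork c.wl w c.wr mw

def initConfig (M : TM) : Config M := ⟨M.start, 0, [], .blank, []⟩

/-- Number of work-tape cells used by a configuration. -/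
def Config.workSize {M : TM} (c : Config M) : ℕ := c.wl.length + 1 + c.wr.length

def TMFinal (M : TM) (i : List Bool) (c : Config M) : Prop := ∀ c', ¬ TMStep M i c c'

/-- `⟨1⟩ := λx.λy.x` and `⟨0⟩ := λx.λy.y`. -/
def encBool (b : Bool) : Term :=
  if b then .lam 0 (.lam 1 (.var 0)) else .lam 0 (.lam 1 (.var 1))

/-!
The Naive KAM scrolls through `⟨s⟩` one bit per round, and each round unfolds `fix` once.
Unfolding `θ` binds `x` and `y` to two closures over the environment of the previous `x x y`,
so without sharing that environment is duplicated in every round: after `i` rounds the closure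
`(x x y, eᵢ)` waiting on the stack holds `2 ^ (i + 2) - 1` closures.
-/

open Relation

def NK.next : State → Option State
  | ⟨.app t u, e, S⟩ => some ⟨t, e, .mk u e :: S⟩
  | ⟨.lam x t, e, c :: S⟩ => some ⟨t, .cons x c e, S⟩
  | ⟨.lam _ _, _, []⟩ => none
  | ⟨.var x, e, S⟩ =>
    match e.lookup x with
    | some (.mk u e') => some ⟨u, e', S⟩
    | none => none

def NK.nextN : ℕ → State → Option State
  | 0, s => some s
  | n + 1, s => (NK.next s).bind (NK.nextN n)

theorem NK.of_next_eq_some {s s' : State} (h : NK.next s = some s') : NK s s' := by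
  obtain ⟨t, e, S⟩ := s
  cases t with
  | app t u => cases h; exact .sea t u e S
  | lam x t =>
    cases S with
    | nil => cases h
    | cons c S => cases h; exact .beta x t e c S
  | var x =>
    simp only [NK.next] at h
    split at h
    · cases h; exact .sub S ‹_›
    · cases h

theorem NK.reflTransGen_of_nextN_eq_some {n : ℕ} {s s' : State} (h : NK.nextN n s = some s') :
    ReflTransGen NK s s' := by
  induction n generalizing s with
  | zero => cases h; rfl
  | succ n ih =>
    obtain ⟨s₁, h₁, h⟩ := Option.bind_eq_some_iff.mp h
    exact .head (NK.of_next_eq_some h₁) (ih h)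

def thetaEnv (cx cy : Clo) : Env := .cons 1 cy (.cons 0 cx .nil)

theorem reach_theta_unfold (cx : Clo) (t : Term) (e : Env) (S : List Clo) :
    ReflTransGen NK ⟨tmTheta, .nil, cx :: .mk t e :: S⟩
      ⟨t, e, .mk xxy (thetaEnv cx (.mk t e)) :: S⟩ :=
  NK.reflTransGen_of_nextN_eq_some (n := 4) rfl

/-- The paper's `eᵢ`, with the bindings in the order in which the machine pushes them
(`eE` lists them the other way round). -/
def fixEnv : ℕ → Env
  | 0 => thetaEnv (.mk tmTheta .nil) (.mk tmToyaux .nil)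
  | i + 1 => thetaEnv (.mk (.var 0) (fixEnv i)) (.mk (.var 1) (fixEnv i))

theorem fixEnv_lookup_succ {i x : ℕ} {c : Clo} (h : (fixEnv 0).lookup x = some c) :
    (fixEnv (i + 1)).lookup x = some (.mk (.var x) (fixEnv i)) := by
  rcases x with _ | _ | x
  · rfl
  · rfl
  · simp [fixEnv, thetaEnv, Env.lookup] at h

theorem reach_var_fixEnv {i x : ℕ} {u : Term} {e : Env}
    (h : (fixEnv 0).lookup x = some (.mk u e)) (S : List Clo) :
    ReflTransGen NK ⟨.var x, fixEnv i, S⟩ ⟨u, e, S⟩ := by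
  induction i with
  | zero => exact .single (.sub S h)
  | succ i ih => exact .head (.sub S (fixEnv_lookup_succ h)) ih

theorem reach_fix_unfold (i : ℕ) (S : List Clo) :
    ReflTransGen NK ⟨.var 0, fixEnv i, .mk (.var 0) (fixEnv i) :: .mk (.var 1) (fixEnv i) :: S⟩
      ⟨tmToyaux, .nil, .mk xxy (fixEnv (i + 1)) :: S⟩ :=
  (reach_var_fixEnv rfl _).trans <| (reach_theta_unfold _ _ _ _).trans (reach_var_fixEnv rfl _)

theorem reach_scroll_bit (i : ℕ) (b : Bool) (r : List Bool) (E : Env) :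
    ∃ E', ReflTransGen NK ⟨tmToyaux, .nil, [.mk xxy (fixEnv i), .mk (encStr (b :: r)) E]⟩
      ⟨tmToyaux, .nil, [.mk xxy (fixEnv (i + 1)), .mk (encStr r) E']⟩ := by
  -- `z f f I` lets the bit of `⟨b·r⟩` select `f`, which is then applied to `⟨r⟩`.
  obtain ⟨E', h⟩ : ∃ E',
      NK.nextN 14 ⟨tmToyaux, .nil, [.mk xxy (fixEnv i), .mk (encStr (b :: r)) E]⟩ =
        some ⟨.var 0, fixEnv i,
          [.mk (.var 0) (fixEnv i), .mk (.var 1) (fixEnv i), .mk (encStr r) E']⟩ := by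
    cases b <;> exact ⟨_, rfl⟩
  exact ⟨E', (NK.reflTransGen_of_nextN_eq_some h).trans (reach_fix_unfold i _)⟩

theorem reach_scroll (s : List Bool) (i : ℕ) (E : Env) :
    ∃ E', ReflTransGen NK ⟨tmToyaux, .nil, [.mk xxy (fixEnv i), .mk (encStr s) E]⟩
      ⟨tmToyaux, .nil, [.mk xxy (fixEnv (i + s.length)), .mk (encStr []) E']⟩ := by
  induction s generalizing i E with
  | nil => exact ⟨E, .refl⟩
  | cons b r ih =>
    obtain ⟨E₁, h₁⟩ := reach_scroll_bit i b r E
    obtain ⟨E₂, h₂⟩ := ih (i + 1) E₁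
    refine ⟨E₂, h₁.trans ?_⟩
    rwa [List.length_cons, ← add_assoc, add_right_comm]

theorem reach_scroll_start (s : List Bool) :
    ReflTransGen NK (initState (.app tmToy (encStr s)))
      ⟨tmToyaux, .nil, [.mk xxy (fixEnv 0), .mk (encStr s) .nil]⟩ :=
  (NK.reflTransGen_of_nextN_eq_some (n := 3) rfl).trans (reach_theta_unfold _ _ _ _)

theorem fixEnv_count_add_two (i : ℕ) : Env.count (fixEnv i) + 2 = 2 ^ (i + 2) := by
  induction i with
  | zero => rfl
  | succ i ih =>
    simp only [fixEnv, thetaEnv, Env.count, Clo.count] at ih ⊢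
    rw [pow_succ]
    omega

/-- the Naive KAM evaluates `toy ⟨s⟩` in space `Ω(2^{|s|})`:
some reachable state has closure count at least `2^{|s|}/k`. -/
theorem naive_kam_toy_exponential_space :
    ∃ k : ℕ, 0 < k ∧ ∀ s : List Bool, ∃ st : State,
      Relation.ReflTransGen NK (initState (.app tmToy (encStr s))) st ∧
      2 ^ s.length ≤ k * st.count := by
  refine ⟨1, one_pos, fun s => ?_⟩
  obtain ⟨E, hE⟩ := reach_scroll s 0 .nil
  refine ⟨_, (reach_scroll_start s).trans hE, ?_⟩
  have hcount := fixEnv_count_add_two (0 + s.length)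
  simp only [State.count, Env.count, Clo.count, List.map_cons, List.map_nil, List.sum_cons,
    List.sum_nil, zero_add, one_mul, pow_succ] at hcount ⊢
  omega
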